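/- arXiv:2206.05002 — 4 statements merged into one kernel-verified Lean document; each statement's English description precedes it below -/
import Mathlib

section
/- Let E ⊆ ℝ^{n+1} satisfy the uniform ball condition with radius r > 0. Then the outer unit normal ν_E is (1/r)-Lipschitz on ∂E: for all x, y ∈ ∂E, |ν_E(x) − ν_E(y)| ≤ |x−y|/r. -/
/-- `ν` is an outer-unit-normal field of `E` realizing the uniform ball condition with
radius `r`: at each boundary point `x`, `ν x` is a unit vector such that the open ball of
radius `r` tangent from inside lies in `E` and the one tangent from outside lies in `Eᶜ`. -/
def UBCNormal {n : ℕ} (E : Set (EuclideanSpace ℝ (Fin (n+1)))) (r : ℝ)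
    (ν : EuclideanSpace ℝ (Fin (n+1)) → EuclideanSpace ℝ (Fin (n+1))) : Prop :=
  ∀ x ∈ frontier E, ‖ν x‖ = 1 ∧ Metric.ball (x - r • ν x) r ⊆ E ∧
    Metric.ball (x + r • ν x) r ⊆ Eᶜ

set_option maxHeartbeats 1000000 in
/-- If `E ⊆ ℝ^{n+1}` satisfies the uniform ball condition with radius `r > 0`, the outer
unit normal is `(1/r)`-Lipschitz on `∂E`: `|ν_E(x) − ν_E(y)| ≤ |x−y|/r`. -/
theorem normal_lipschitz {n : ℕ} (E : Set (EuclideanSpace ℝ (Fin (n+1)))) (r : ℝ)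
    (hr : 0 < r) (ν : EuclideanSpace ℝ (Fin (n+1)) → EuclideanSpace ℝ (Fin (n+1)))
    (hν : UBCNormal E r ν) :
    ∀ x ∈ frontier E, ∀ y ∈ frontier E, ‖ν x - ν y‖ ≤ ‖x - y‖ / r := by
  intro x hx y hy
  obtain ⟨hxn, hxi, hxo⟩ := hν x hx
  obtain ⟨hyn, hyi, hyo⟩ := hν y hy
  have key : ∀ a b : EuclideanSpace ℝ (Fin (n+1)), Metric.ball a r ⊆ E →
      Metric.ball b r ⊆ Eᶜ → 2 * r ≤ dist a b := by
    intro a b ha hb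
    by_contra h
    push_neg at h
    have hm1 : midpoint ℝ a b ∈ Metric.ball a r := by
      rw [Metric.mem_ball, dist_midpoint_left]
      simp only [Real.norm_ofNat]
      nlinarith [dist_nonneg (x := a) (y := b)]
    have hm2 : midpoint ℝ a b ∈ Metric.ball b r := by
      rw [Metric.mem_ball, dist_midpoint_right]
      simp only [Real.norm_ofNat]
      nlinarith [dist_nonneg (x := a) (y := b)]
    exact hb hm2 (ha hm1)
  have h1 := key (x - r • ν x) (y + r • ν y) hxi hyo
  have h2 := key (y - r • ν y) (x + r • ν x) hyi hxo
  set u : EuclideanSpace ℝ (Fin (n+1)) := x - y with hu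
  set w : EuclideanSpace ℝ (Fin (n+1)) := r • (ν x + ν y) with hw
  have e1 : (x - r • ν x) - (y + r • ν y) = u - w := by
    simp only [hu, hw, smul_add]; abel
  have e2 : (y - r • ν y) - (x + r • ν x) = -(u + w) := by
    simp only [hu, hw, smul_add]; abel
  rw [dist_eq_norm, e1] at h1
  rw [dist_eq_norm, e2, norm_neg] at h2
  have par1 := parallelogram_law_with_norm ℝ u w
  have par2 := parallelogram_law_with_norm ℝ (ν x) (ν y)
  have hwn : ‖w‖ = r * ‖ν x + ν y‖ := by
    rw [hw, norm_smul, Real.norm_of_nonneg hr.le]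
  have s1 : 4 * r ^ 2 ≤ ‖u - w‖ ^ 2 := by nlinarith [norm_nonneg (u - w)]
  have s2 : 4 * r ^ 2 ≤ ‖u + w‖ ^ 2 := by nlinarith [norm_nonneg (u + w)]
  rw [hxn, hyn] at par2
  have hwn2 : ‖w‖ ^ 2 = r ^ 2 * ‖ν x + ν y‖ ^ 2 := by rw [hwn]; ring
  have h4 : ‖ν x + ν y‖ ^ 2 = 4 - ‖ν x - ν y‖ ^ 2 := by nlinarith [par2]
  have hsq : r ^ 2 * ‖ν x - ν y‖ ^ 2 ≤ ‖u‖ ^ 2 := by nlinarith [par1, hwn2, h4, sq_nonneg r]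
  rw [le_div_iff₀ hr]
  nlinarith [hsq, norm_nonneg u, mul_nonneg (norm_nonneg (ν x - ν y)) hr.le]
end

section
/- Let E ⊆ ℝ^{n+1} satisfy the uniform ball condition with radius r > 0, and let ν_E denote the outer unit normal on ∂E. Then for all x, y ∈ ∂E, ν_E(x)·ν_E(y) ≥ 1 − |x−y|²/(2r²). -/
/-!
The interior ball at `y` and the exterior ball at `x` are disjoint, so their centres
`y - r ν(y)` and `x + r ν(x)` are at distance at least `2r`; likewise for the interior ball at `x`
and the exterior ball at `y`. With `v = x - y` and `w = r (ν(x) + ν(y))` these say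
`‖v + w‖, ‖v - w‖ ≥ 2r`, and the parallelogram law turns them into
`4r² ≤ ‖v‖² + ‖w‖² = ‖x - y‖² + 2r² (1 + ν(x)·ν(y))`.
-/

open Metric RealInnerProductSpace

section InnerProductSpace

variable {F : Type*} [NormedAddCommGroup F] [InnerProductSpace ℝ F]

lemma sq_le_norm_sq_add_norm_sq_of_le_norm_add_of_le_norm_sub {v w : F} {c : ℝ} (hc : 0 ≤ c)
    (h_add : c ≤ ‖v + w‖) (h_sub : c ≤ ‖v - w‖) : c ^ 2 ≤ ‖v‖ ^ 2 + ‖w‖ ^ 2 := by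
  have h_add_sq : c ^ 2 ≤ ‖v + w‖ ^ 2 := pow_le_pow_left₀ hc h_add 2
  have h_sub_sq : c ^ 2 ≤ ‖v - w‖ ^ 2 := pow_le_pow_left₀ hc h_sub 2
  linarith [parallelogram_law_with_norm ℝ v w]

lemma norm_smul_add_sq_of_norm_eq_one {u u' : F} (hu : ‖u‖ = 1) (hu' : ‖u'‖ = 1) (r : ℝ) :
    ‖r • (u + u')‖ ^ 2 = 2 * r ^ 2 * (1 + ⟪u, u'⟫) := by
  rw [norm_smul, mul_pow, norm_add_sq_real, hu, hu', Real.norm_eq_abs, sq_abs]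
  ring

theorem one_sub_norm_sub_sq_div_le_inner_of_ball_subset {s : Set F} {r : ℝ} (hr : 0 < r)
    {x y u u' : F} (hu : ‖u‖ = 1) (hu' : ‖u'‖ = 1)
    (hx_in : ball (x - r • u) r ⊆ s) (hx_out : ball (x + r • u) r ⊆ sᶜ)
    (hy_in : ball (y - r • u') r ⊆ s) (hy_out : ball (y + r • u') r ⊆ sᶜ) :
    1 - ‖x - y‖ ^ 2 / (2 * r ^ 2) ≤ ⟪u, u'⟫ := by
  have separated : ∀ a b : F, ball a r ⊆ s → ball b r ⊆ sᶜ → 2 * r ≤ dist a b :=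
    fun a b ha hb => two_mul r ▸ (disjoint_ball_ball_iff hr hr).1 (disjoint_compl_right.mono ha hb)
  have h_add : 2 * r ≤ ‖(x - y) + r • (u + u')‖ :=
    calc 2 * r ≤ dist (y - r • u') (x + r • u) := separated _ _ hy_in hx_out
      _ = ‖(x - y) + r • (u + u')‖ := by rw [dist_comm, dist_eq_norm]; congr 1; module
  have h_sub : 2 * r ≤ ‖(x - y) - r • (u + u')‖ :=
    calc 2 * r ≤ dist (x - r • u) (y + r • u') := separated _ _ hx_in hy_out
      _ = ‖(x - y) - r • (u + u')‖ := by rw [dist_eq_norm]; congr 1; module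
  have key := sq_le_norm_sq_add_norm_sq_of_le_norm_add_of_le_norm_sub (by positivity) h_add h_sub
  rw [norm_smul_add_sq_of_norm_eq_one hu hu'] at key
  rw [sub_le_iff_le_add, ← sub_le_iff_le_add', le_div_iff₀ (by positivity)]
  linarith

end InnerProductSpace

/-- If `E` satisfies the uniform ball condition with radius `r > 0`, then for all
`x, y ∈ ∂E` one has `ν_E(x)·ν_E(y) ≥ 1 − |x−y|²/(2r²)`. -/
theorem normal_inner_lower_bound {n : ℕ} (E : Set (EuclideanSpace ℝ (Fin (n+1)))) (r : ℝ)
    (hr : 0 < r) (ν : EuclideanSpace ℝ (Fin (n+1)) → EuclideanSpace ℝ (Fin (n+1)))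
    (hν : UBCNormal E r ν) :
    ∀ x ∈ frontier E, ∀ y ∈ frontier E,
      (1 : ℝ) - ‖x - y‖ ^ 2 / (2 * r ^ 2) ≤ (inner ℝ (ν x) (ν y) : ℝ) := by
  intro x hx y hy
  obtain ⟨hνx, hx_in, hx_out⟩ := hν x hx
  obtain ⟨hνy, hy_in, hy_out⟩ := hν y hy
  exact one_sub_norm_sub_sq_div_le_inner_of_ball_subset hr hνx hνy hx_in hx_out hy_in hy_out
end

section
/- Let E ⊆ ℝ^{n+1} satisfy the uniform ball condition with radius r > 0. Then for every 0 < ρ < r, the nearest-point projection π_{∂E} is (r/(r−ρ))-Lipschitz on the closed tubular neighborhood {z : dist(z, ∂E) ≤ ρ}. -/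
def UnifBallCond {n : ℕ} (E : Set (EuclideanSpace ℝ (Fin (n+1)))) (r : ℝ) : Prop :=
  ∀ x ∈ frontier E, ∃ cIn cOut : EuclideanSpace ℝ (Fin (n+1)),
    Metric.ball cIn r ⊆ E ∧ Metric.ball cOut r ⊆ Eᶜ ∧ dist x cIn = r ∧ dist x cOut = r

/-!
Let `a ∈ ∂E` be a nearest boundary point of `x`, at distance `d < r`. The ball `B(x, d)` misses
`∂E`, so it lies on one side of `∂E`, say in `E`, and is therefore disjoint from the exterior
tangent ball `B(c, r)` at `a`. Hence `dist x c = d + r`, so `a` lies on the segment from `x` to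
`c` and `x - a = (d / r) • (c' - a)`, where `c' = 2a - c` is the centre of the interior tangent
ball. Every `b ∈ ∂E` lies outside `B(c', r)`, which gives `⟪x - a, b - a⟫ ≤ d / (2r) ‖b - a‖²`.
Adding this inequality for `(x, π x, π y)` and `(y, π y, π x)` and expanding `‖π x - π y‖²`
yields `(1 - ρ / r) ‖π x - π y‖² ≤ ‖π x - π y‖ ‖x - y‖`.
-/

open Metric
open scoped RealInnerProductSpace

theorem smul_sub_eq_smul_sub_of_dist_add_dist_eq {V : Type*} [NormedAddCommGroup V]
    [NormedSpace ℝ V] [StrictConvexSpace ℝ V] {x a c : V}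
    (h : dist x a + dist a c = dist x c) : dist a c • (x - a) = dist x a • (a - c) := by
  have hray : SameRay ℝ (x - a) (a - c) := by
    rw [sameRay_iff_norm_add, sub_add_sub_cancel, ← dist_eq_norm, ← dist_eq_norm,
      ← dist_eq_norm, h]
  simpa only [dist_eq_norm] using hray.norm_smul_eq.symm

section InnerProductSpace

variable {V : Type*} [NormedAddCommGroup V] [InnerProductSpace ℝ V]

theorem sub_eq_sub_of_disjoint_ball {a c c' : V} {r : ℝ} (hr : 0 < r) (hc : dist a c = r)
    (hc' : dist a c' = r) (hdisj : Disjoint (ball c r) (ball c' r)) : c - a = a - c' := by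
  have htri : dist c a + dist a c' = dist c c' := by
    refine le_antisymm ?_ (dist_triangle _ _ _)
    rw [dist_comm c a, hc, hc']
    exact (disjoint_ball_ball_iff hr hr).1 hdisj
  have hsmul := smul_sub_eq_smul_sub_of_dist_add_dist_eq htri
  rw [dist_comm c a, hc, hc'] at hsmul
  exact smul_right_injective V hr.ne' hsmul

theorem real_inner_sub_le_of_dist_le_dist {a b c : V} (h : dist a c ≤ dist b c) :
    ⟪c - a, b - a⟫ ≤ ‖b - a‖ ^ 2 / 2 := by
  have hexp := norm_sub_sq_real (b - a) (c - a)
  rw [sub_sub_sub_cancel_right, real_inner_comm] at hexp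
  have hsq : ‖c - a‖ ^ 2 ≤ ‖b - c‖ ^ 2 := by
    rw [← dist_eq_norm, ← dist_eq_norm, dist_comm c a]
    gcongr
  linarith

theorem real_inner_le_of_dist_add_le_dist {a b c c' x : V} {r : ℝ} (hr : 0 < r)
    (hac : dist a c = r) (hc' : c' - a = a - c) (hxc : dist x a + r ≤ dist x c)
    (hbc' : r ≤ dist b c') : ⟪x - a, b - a⟫ ≤ dist x a / (2 * r) * ‖b - a‖ ^ 2 := by
  have hcol : r • (x - a) = dist x a • (c' - a) := by
    rw [hc', ← hac]
    exact smul_sub_eq_smul_sub_of_dist_add_dist_eq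
      (le_antisymm (hac ▸ hxc) (dist_triangle _ _ _))
  have hac' : dist a c' = r := by rw [dist_comm, dist_eq_norm, hc', ← dist_eq_norm, hac]
  have hb := real_inner_sub_le_of_dist_le_dist (hac'.trans_le hbc')
  have hinner : r * ⟪x - a, b - a⟫ = dist x a * ⟪c' - a, b - a⟫ := by
    rw [← real_inner_smul_left, hcol, real_inner_smul_left]
  rw [div_mul_eq_mul_div, le_div_iff₀ (by positivity)]
  nlinarith [mul_le_mul_of_nonneg_left hb (dist_nonneg (x := x) (y := a))]

theorem dist_le_of_real_inner_le {a b x y : V} {s : ℝ}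
    (ha : ⟪x - a, b - a⟫ ≤ s * ‖b - a‖ ^ 2) (hb : ⟪y - b, a - b⟫ ≤ s * ‖a - b‖ ^ 2) :
    (1 - 2 * s) * dist a b ≤ dist x y := by
  have hexp : dist a b ^ 2 = ⟪x - a, b - a⟫ + ⟪a - b, x - y⟫ + ⟪y - b, a - b⟫ := by
    rw [dist_eq_norm, ← real_inner_self_eq_norm_sq]
    simp only [inner_sub_left, inner_sub_right, real_inner_comm]
    ring
  have hcs : ⟪a - b, x - y⟫ ≤ dist a b * dist x y := by
    simpa only [dist_eq_norm] using real_inner_le_norm (a - b) (x - y)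
  rw [norm_sub_rev, ← dist_eq_norm] at ha
  rw [← dist_eq_norm] at hb
  rcases (dist_nonneg (x := a) (y := b)).eq_or_lt with h0 | h0
  · rw [← h0, mul_zero]
    exact dist_nonneg
  · refine le_of_mul_le_mul_left ?_ h0
    nlinarith

end InnerProductSpace

theorem IsPreconnected.subset_or_subset_compl_of_disjoint_frontier {X : Type*}
    [TopologicalSpace X] {s E : Set X} (hs : IsPreconnected s) (hsE : Disjoint s (frontier E)) :
    s ⊆ E ∨ s ⊆ Eᶜ := by
  have hdisj : Disjoint (interior E) (interior Eᶜ) :=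
    disjoint_compl_right.mono interior_subset interior_subset
  have hcover : s ⊆ interior E ∪ interior Eᶜ :=
    (compl_frontier_eq_union_interior (s := E)) ▸ hsE.subset_compl_right
  exact (hs.subset_or_subset isOpen_interior isOpen_interior hdisj hcover).imp
    (·.trans interior_subset) (·.trans interior_subset)

namespace UnifBallCond

variable {n : ℕ} {E : Set (EuclideanSpace ℝ (Fin (n+1)))} {r : ℝ}

theorem compl (hE : UnifBallCond E r) : UnifBallCond Eᶜ r := by
  intro a ha
  rw [frontier_compl] at ha
  obtain ⟨cIn, cOut, hIn, hOut, haIn, haOut⟩ := hE a ha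
  exact ⟨cOut, cIn, hOut, by rwa [compl_compl], haOut, haIn⟩

theorem real_inner_le_of_ball_subset (hr : 0 < r) (hE : UnifBallCond E r)
    {a b x : EuclideanSpace ℝ (Fin (n+1))} (ha : a ∈ frontier E) (hb : b ∈ frontier E)
    (hxa : 0 < dist x a) (hx : ball x (dist x a) ⊆ E) :
    ⟪x - a, b - a⟫ ≤ dist x a / (2 * r) * ‖b - a‖ ^ 2 := by
  obtain ⟨cIn, cOut, hIn, hOut, haIn, haOut⟩ := hE a ha
  have hanti : cIn - a = a - cOut :=
    sub_eq_sub_of_disjoint_ball hr haIn haOut (disjoint_compl_right.mono hIn hOut)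
  have hxc : dist x a + r ≤ dist x cOut :=
    (disjoint_ball_ball_iff hxa hr).1 (disjoint_compl_right.mono hx hOut)
  have hbc : r ≤ dist b cIn := by
    rw [← not_lt, ← mem_ball]
    exact fun hbB => disjoint_interior_frontier.ne_of_mem
      (interior_maximal hIn isOpen_ball hbB) hb rfl
  exact real_inner_le_of_dist_add_le_dist hr haOut hanti hxc hbc

theorem real_inner_le (hr : 0 < r) (hE : UnifBallCond E r)
    {a b x : EuclideanSpace ℝ (Fin (n+1))} (ha : a ∈ frontier E) (hb : b ∈ frontier E)
    (hxa : dist x a = infDist x (frontier E)) :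
    ⟪x - a, b - a⟫ ≤ infDist x (frontier E) / (2 * r) * ‖b - a‖ ^ 2 := by
  rw [← hxa]
  rcases (dist_nonneg (x := x) (y := a)).eq_or_lt with h0 | h0
  · simp [dist_eq_zero.1 h0.symm]
  have hside := (convex_ball x _).isPreconnected.subset_or_subset_compl_of_disjoint_frontier
    (hxa ▸ disjoint_ball_infDist)
  rcases hside with hxE | hxEc
  · exact hE.real_inner_le_of_ball_subset hr ha hb h0 hxE
  · rw [← frontier_compl] at ha hb
    exact hE.compl.real_inner_le_of_ball_subset hr ha hb h0 hxEc

end UnifBallCond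

theorem projection_lipschitz_general {n : ℕ} (E : Set (EuclideanSpace ℝ (Fin (n+1)))) (r : ℝ)
    (hr : 0 < r) (hUBC : UnifBallCond E r)
    (π : EuclideanSpace ℝ (Fin (n+1)) → EuclideanSpace ℝ (Fin (n+1)))
    (hπ : ∀ x, Metric.infDist x (frontier E) < r →
      π x ∈ frontier E ∧ dist x (π x) = Metric.infDist x (frontier E) ∧
      ∀ p ∈ frontier E, dist x p = Metric.infDist x (frontier E) → p = π x)
    (ρ : ℝ) (hρr : ρ < r) :
    ∀ x y : EuclideanSpace ℝ (Fin (n+1)),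
      Metric.infDist x (frontier E) ≤ ρ → Metric.infDist y (frontier E) ≤ ρ →
      dist (π x) (π y) ≤ (r / (r - ρ)) * dist x y := by
  intro x y hx hy
  obtain ⟨hxF, hxπ, -⟩ := hπ x (hx.trans_lt hρr)
  obtain ⟨hyF, hyπ, -⟩ := hπ y (hy.trans_lt hρr)
  have hxb : ⟪x - π x, π y - π x⟫ ≤ ρ / (2 * r) * ‖π y - π x‖ ^ 2 :=
    (hUBC.real_inner_le hr hxF hyF hxπ).trans (by gcongr)
  have hyb : ⟪y - π y, π x - π y⟫ ≤ ρ / (2 * r) * ‖π x - π y‖ ^ 2 :=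
    (hUBC.real_inner_le hr hyF hxF hyπ).trans (by gcongr)
  rw [div_mul_eq_mul_div, le_div_iff₀ (sub_pos.2 hρr)]
  calc dist (π x) (π y) * (r - ρ)
      = r * ((1 - 2 * (ρ / (2 * r))) * dist (π x) (π y)) := by field_simp
    _ ≤ r * dist x y := by gcongr; exact dist_le_of_real_inner_le hxb hyb

/-- If `E` satisfies the uniform ball condition with radius `r > 0`, then for every
`0 < ρ < r` the nearest-point projection `π_{∂E}` is `(r/(r−ρ))`-Lipschitz on the closed
tubular neighborhood `{z : dist(z,∂E) ≤ ρ}`. Here `π` is the (well-defined) nearest-point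
projection onto `∂E`, characterized in `N_r(∂E)` by the stated hypothesis. -/
theorem projection_lipschitz {n : ℕ} (E : Set (EuclideanSpace ℝ (Fin (n+1)))) (r : ℝ)
    (hr : 0 < r) (hUBC : UnifBallCond E r)
    (π : EuclideanSpace ℝ (Fin (n+1)) → EuclideanSpace ℝ (Fin (n+1)))
    (hπ : ∀ x, Metric.infDist x (frontier E) < r →
      π x ∈ frontier E ∧ dist x (π x) = Metric.infDist x (frontier E) ∧
      ∀ p ∈ frontier E, dist x p = Metric.infDist x (frontier E) → p = π x)
    (ρ : ℝ) (hρ : 0 < ρ) (hρr : ρ < r) :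
    ∀ x y : EuclideanSpace ℝ (Fin (n+1)),
      Metric.infDist x (frontier E) ≤ ρ → Metric.infDist y (frontier E) ≤ ρ →
      dist (π x) (π y) ≤ (r / (r - ρ)) * dist x y :=
  projection_lipschitz_general E r hr hUBC π hπ ρ hρr
end

section
/- Let E ⊆ ℝ^{n+1} be bounded and satisfy a uniform ball condition, and set ‖S_E‖ = sup{|((x−y)·ν_E(x))|/|x−y|² : x, y ∈ ∂E, x ≠ y}. Then for all distinct x, y ∈ ∂E, |ν_E(x) − ν_E(y)| ≤ 2 ‖S_E‖ |x−y|. -/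
open Metric RealInnerProductSpace

theorem IsPreconnected.subset_interior_of_disjoint_frontier {X : Type*} [TopologicalSpace X]
    {s t : Set X} (hs : IsPreconnected s) (hst : Disjoint s (frontier t))
    (hne : (s ∩ interior t).Nonempty) : s ⊆ interior t :=
  hs.subset_of_closure_inter_subset isOpen_interior hne fun z ⟨hzc, hzs⟩ => by
    by_contra hz
    exact Set.disjoint_left.1 hst hzs ⟨closure_mono interior_subset hzc, hz⟩

theorem le_dist_of_ball_subset_of_mem_frontier {X : Type*} [PseudoMetricSpace X] {s : Set X}
    {c z : X} {ρ : ℝ} (h : ball c ρ ⊆ s) (hz : z ∈ frontier s) : ρ ≤ dist z c :=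
  not_lt.1 fun hlt => hz.2 (isOpen_ball.subset_interior_iff.2 h hlt)

section InnerProductSpace

variable {V : Type*} [NormedAddCommGroup V] [InnerProductSpace ℝ V]

theorem le_dist_tangent_centers_iff {u : V} (hu : ‖u‖ = 1) {ρ : ℝ} (hρ : 0 ≤ ρ) (x z : V) :
    ρ ≤ dist z (x - ρ • u) ∧ ρ ≤ dist z (x + ρ • u) ↔ 2 * ρ * |⟪x - z, u⟫| ≤ ‖x - z‖ ^ 2 := by
  have hρu : ‖ρ • u‖ = ρ := by rw [norm_smul, hu, Real.norm_of_nonneg hρ, mul_one]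
  have hsub : dist z (x - ρ • u) ^ 2 = ‖x - z‖ ^ 2 - 2 * ρ * ⟪x - z, u⟫ + ρ ^ 2 := by
    rw [dist_comm, dist_eq_norm, show x - ρ • u - z = (x - z) - ρ • u by abel,
      norm_sub_sq_real, real_inner_smul_right, hρu]
    ring
  have hadd : dist z (x + ρ • u) ^ 2 = ‖x - z‖ ^ 2 + 2 * ρ * ⟪x - z, u⟫ + ρ ^ 2 := by
    rw [dist_comm, dist_eq_norm, show x + ρ • u - z = (x - z) + ρ • u by abel,
      norm_add_sq_real, real_inner_smul_right, hρu]
    ring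
  have habs : 2 * ρ * |⟪x - z, u⟫| = |2 * ρ * ⟪x - z, u⟫| := by
    rw [abs_mul, abs_of_nonneg (by positivity : 0 ≤ 2 * ρ)]
  rw [← pow_le_pow_iff_left₀ hρ dist_nonneg two_ne_zero,
    ← pow_le_pow_iff_left₀ hρ dist_nonneg two_ne_zero, hsub, hadd, habs, abs_le]
  constructor <;> rintro ⟨h₁, h₂⟩ <;> constructor <;> linarith

theorem mul_norm_sub_le_of_le_dist_centers {x y u v : V} (hu : ‖u‖ = 1) (hv : ‖v‖ = 1) {ρ : ℝ}
    (hρ : 0 ≤ ρ) (hxy : 2 * ρ ≤ dist (x - ρ • u) (y + ρ • v))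
    (hyx : 2 * ρ ≤ dist (y - ρ • v) (x + ρ • u)) : ρ * ‖u - v‖ ≤ ‖x - y‖ := by
  have hxy' : (2 * ρ) ^ 2 ≤ ‖(x - y) - ρ • (u + v)‖ ^ 2 := by
    rw [show (x - y) - ρ • (u + v) = (x - ρ • u) - (y + ρ • v) by module, ← dist_eq_norm]
    gcongr
  have hyx' : (2 * ρ) ^ 2 ≤ ‖(x - y) + ρ • (u + v)‖ ^ 2 := by
    rw [show (x - y) + ρ • (u + v) = -((y - ρ • v) - (x + ρ • u)) by module, norm_neg,
      ← dist_eq_norm]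
    gcongr
  have hpar₁ := parallelogram_law_with_norm ℝ (x - y) (ρ • (u + v))
  have hpar₂ := parallelogram_law_with_norm ℝ u v
  rw [norm_smul, Real.norm_of_nonneg hρ] at hpar₁
  rw [hu, hv] at hpar₂
  rw [← pow_le_pow_iff_left₀ (by positivity) (norm_nonneg _) two_ne_zero]
  nlinarith

end InnerProductSpace

namespace UBCNormal

variable {n : ℕ} {E : Set (EuclideanSpace ℝ (Fin (n+1)))} {r ρ : ℝ}
  {ν : EuclideanSpace ℝ (Fin (n+1)) → EuclideanSpace ℝ (Fin (n+1))}
  {x y : EuclideanSpace ℝ (Fin (n+1))}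

theorem compl (hν : UBCNormal E r ν) : UBCNormal Eᶜ r (-ν) := by
  intro x hx
  rw [frontier_compl] at hx
  obtain ⟨hnorm, hin, hout⟩ := hν x hx
  simp only [Pi.neg_apply, norm_neg, smul_neg, sub_neg_eq_add, ← sub_eq_add_neg, compl_compl]
  exact ⟨hnorm, hout, hin⟩

theorem two_mul_abs_inner_le (hν : UBCNormal E r ν) (hr : 0 ≤ r) (hx : x ∈ frontier E)
    (hy : y ∈ frontier E) : 2 * r * |⟪x - y, ν x⟫| ≤ ‖x - y‖ ^ 2 :=
  (le_dist_tangent_centers_iff (hν x hx).1 hr x y).1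
    ⟨le_dist_of_ball_subset_of_mem_frontier (hν x hx).2.1 hy,
      le_dist_of_ball_subset_of_mem_frontier (hν x hx).2.2 (frontier_compl E ▸ hy)⟩

/-- The two-point bound at scale `ρ` keeps every boundary point out of this ball, so by
connectedness it stays in `interior E`, which it meets at the centre of the ball of radius `r`. -/
theorem ball_subset_interior (hν : UBCNormal E r ν) (hr : 0 < r) (hρ : r ≤ ρ)
    (hx : x ∈ frontier E) (hb : ∀ z ∈ frontier E, 2 * ρ * |⟪x - z, ν x⟫| ≤ ‖x - z‖ ^ 2) :
    ball (x - ρ • ν x) ρ ⊆ interior E := by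
  obtain ⟨hnorm, hin, -⟩ := hν x hx
  refine (convex_ball _ _).isPreconnected.subset_interior_of_disjoint_frontier
    (Set.disjoint_right.2 fun z hz => ?_) ⟨x - r • ν x, ?_, ?_⟩
  · rw [mem_ball, not_lt]
    exact ((le_dist_tangent_centers_iff hnorm (hr.le.trans hρ) x z).2 (hb z hz)).1
  · rw [mem_ball, dist_eq_norm, show x - r • ν x - (x - ρ • ν x) = (ρ - r) • ν x by module,
      norm_smul, hnorm, mul_one, Real.norm_of_nonneg (sub_nonneg.2 hρ)]
    linarith
  · exact isOpen_ball.subset_interior_iff.2 hin (mem_ball_self hr)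

theorem ball_subset_interior_compl (hν : UBCNormal E r ν) (hr : 0 < r) (hρ : r ≤ ρ)
    (hx : x ∈ frontier E) (hb : ∀ z ∈ frontier E, 2 * ρ * |⟪x - z, ν x⟫| ≤ ‖x - z‖ ^ 2) :
    ball (x + ρ • ν x) ρ ⊆ interior Eᶜ := by
  simpa only [Pi.neg_apply, smul_neg, sub_neg_eq_add] using
    hν.compl.ball_subset_interior hr hρ (by rwa [frontier_compl])
      (by simpa only [frontier_compl, Pi.neg_apply, inner_neg_right, abs_neg] using hb)

theorem mul_norm_sub_le (hν : UBCNormal E r ν) (hr : 0 < r) (hρ : r ≤ ρ)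
    (hb : ∀ x ∈ frontier E, ∀ z ∈ frontier E, 2 * ρ * |⟪x - z, ν x⟫| ≤ ‖x - z‖ ^ 2)
    (hx : x ∈ frontier E) (hy : y ∈ frontier E) : ρ * ‖ν x - ν y‖ ≤ ‖x - y‖ := by
  have hρ0 : 0 < ρ := hr.trans_le hρ
  have hsep : ∀ {a b}, a ∈ frontier E → b ∈ frontier E →
      2 * ρ ≤ dist (a - ρ • ν a) (b + ρ • ν b) := fun ha hb' =>
    two_mul ρ ▸ (disjoint_ball_ball_iff hρ0 hρ0).1 <|
      (disjoint_compl_right.mono interior_subset interior_subset).mono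
        (hν.ball_subset_interior hr hρ ha (hb _ ha))
        (hν.ball_subset_interior_compl hr hρ hb' (hb _ hb'))
  exact mul_norm_sub_le_of_le_dist_centers (hν x hx).1 (hν y hy).1 hρ0.le
    (hsep hx hy) (hsep hy hx)

end UBCNormal

section TwoPointRatios

variable {V : Type*} [NormedAddCommGroup V] [InnerProductSpace ℝ V] {A : Set V} {ν : V → V}

def twoPointRatios (A : Set V) (ν : V → V) : Set ℝ :=
  {s | ∃ x ∈ A, ∃ y ∈ A, x ≠ y ∧ s = |⟪x - y, ν x⟫| / ‖x - y‖ ^ 2}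

theorem sSup_twoPointRatios_nonneg : 0 ≤ sSup (twoPointRatios A ν) :=
  Real.sSup_nonneg <| by rintro s ⟨x, -, y, -, -, rfl⟩; positivity

theorem inv_mem_upperBounds_twoPointRatios {ρ : ℝ} (hρ : 0 < ρ)
    (hb : ∀ x ∈ A, ∀ z ∈ A, 2 * ρ * |⟪x - z, ν x⟫| ≤ ‖x - z‖ ^ 2) :
    (2 * ρ)⁻¹ ∈ upperBounds (twoPointRatios A ν) := by
  rintro s ⟨x, hx, y, hy, hxy, rfl⟩
  rw [div_le_iff₀ (pow_pos (norm_sub_pos_iff.2 hxy) 2), le_inv_mul_iff₀ (by positivity)]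
  exact hb x hx y hy

theorem abs_inner_le_sSup_twoPointRatios_mul (hbdd : BddAbove (twoPointRatios A ν)) {x y : V}
    (hx : x ∈ A) (hy : y ∈ A) : |⟪x - y, ν x⟫| ≤ sSup (twoPointRatios A ν) * ‖x - y‖ ^ 2 := by
  rcases eq_or_ne x y with rfl | hxy
  · simp
  · exact (div_le_iff₀ (pow_pos (norm_sub_pos_iff.2 hxy) 2)).1
      (le_csSup hbdd ⟨x, hx, y, hy, hxy, rfl⟩)

end TwoPointRatios

theorem le_two_mul_mul_of_forall_mul_le {a b S r : ℝ} (hS : 0 ≤ S)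
    (hSr : 2 * r * S ≤ 1) (h : ∀ ρ, r ≤ ρ → 2 * ρ * S ≤ 1 → ρ * a ≤ b) : a ≤ 2 * S * b := by
  rcases hS.eq_or_lt with rfl | hS
  · rw [mul_zero, zero_mul]
    by_contra! ha
    have hρa := h (max r ((b + 1) / a)) (le_max_left _ _) (by rw [mul_zero]; exact zero_le_one)
    have := (div_le_iff₀ ha).1 (le_max_right r ((b + 1) / a))
    linarith
  · refine (inv_mul_le_iff₀ (by positivity)).1 (h _ ?_ (le_of_eq (by field_simp)))
    rw [← one_div, le_div_iff₀ (by positivity)]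
    linarith

theorem normal_lipschitz_two_point_general {n : ℕ} (E : Set (EuclideanSpace ℝ (Fin (n+1))))
    (r : ℝ) (hr : 0 < r)
    (ν : EuclideanSpace ℝ (Fin (n+1)) → EuclideanSpace ℝ (Fin (n+1)))
    (hν : UBCNormal E r ν) :
    ∀ x ∈ frontier E, ∀ y ∈ frontier E, x ≠ y →
      ‖ν x - ν y‖ ≤ 2 * sSup {s : ℝ | ∃ x' ∈ frontier E, ∃ y' ∈ frontier E, x' ≠ y' ∧
          s = |(inner ℝ (x' - y') (ν x') : ℝ)| / ‖x' - y'‖ ^ 2} * ‖x - y‖ := by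
  intro x hx y hy _
  change ‖ν x - ν y‖ ≤ 2 * sSup (twoPointRatios (frontier E) ν) * ‖x - y‖
  have hub := inv_mem_upperBounds_twoPointRatios hr fun x hx z hz =>
    hν.two_mul_abs_inner_le hr.le hx hz
  have hSr : 2 * r * sSup (twoPointRatios (frontier E) ν) ≤ 1 := by
    rw [← le_div_iff₀' (by positivity), one_div]; exact Real.sSup_le hub (by positivity)
  refine le_two_mul_mul_of_forall_mul_le sSup_twoPointRatios_nonneg hSr
    fun ρ hρ hρS => hν.mul_norm_sub_le hr hρ (fun x' hx' z hz => ?_) hx hy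
  calc 2 * ρ * |⟪x' - z, ν x'⟫|
      ≤ 2 * ρ * (sSup (twoPointRatios (frontier E) ν) * ‖x' - z‖ ^ 2) :=
        mul_le_mul_of_nonneg_left (abs_inner_le_sSup_twoPointRatios_mul ⟨_, hub⟩ hx' hz)
          (by linarith)
    _ = 2 * ρ * sSup (twoPointRatios (frontier E) ν) * ‖x' - z‖ ^ 2 := by ring
    _ ≤ ‖x' - z‖ ^ 2 := mul_le_of_le_one_left (sq_nonneg _) hρS

/-- For a bounded set `E` satisfying a uniform ball condition, with
`‖S_E‖ = sup{|((x−y)·ν_E(x))|/|x−y|² : x ≠ y ∈ ∂E}`, the outer unit normal satisfies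
`|ν_E(x) − ν_E(y)| ≤ 2 ‖S_E‖ |x−y|` for all distinct `x, y ∈ ∂E`. -/
theorem normal_lipschitz_two_point {n : ℕ} (E : Set (EuclideanSpace ℝ (Fin (n+1))))
    (hbd : Bornology.IsBounded E) (r : ℝ) (hr : 0 < r)
    (ν : EuclideanSpace ℝ (Fin (n+1)) → EuclideanSpace ℝ (Fin (n+1)))
    (hν : UBCNormal E r ν) :
    ∀ x ∈ frontier E, ∀ y ∈ frontier E, x ≠ y →
      ‖ν x - ν y‖ ≤ 2 * sSup {s : ℝ | ∃ x' ∈ frontier E, ∃ y' ∈ frontier E, x' ≠ y' ∧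
          s = |(inner ℝ (x' - y') (ν x') : ℝ)| / ‖x' - y'‖ ^ 2} * ‖x - y‖ :=
  normal_lipschitz_two_point_general E r hr ν hν
end
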